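/- Let φ be a bimodal μ-formula, (M_0, w_0) an arbitrary pointed bimodal Kripke model, and define (M_{k+1}, w_{k+1}) = f_{φ∧φ}(M_k, w_k) for all k ∈ ℕ. Then for all m > n, the pointed models (M_n, w_n) and (M_m, w_m) are n-isomorphic. -/

import Mathlib

/- ### μ-calculus: syntax and Kripke semantics -/

/-- μ-formulas over a modal signature `Λ`, with propositional symbols and
variables indexed by `ℕ`; negation applies to propositional symbols only. -/
inductive MuForm (Λ : Type) : Type where
  | prop : ℕ → MuForm Λ
  | nprop : ℕ → MuForm Λ
  | var : ℕ → MuForm Λ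
  | and : MuForm Λ → MuForm Λ → MuForm Λ
  | or : MuForm Λ → MuForm Λ → MuForm Λ
  | box : Λ → MuForm Λ → MuForm Λ
  | dia : Λ → MuForm Λ → MuForm Λ
  | mu : ℕ → MuForm Λ → MuForm Λ
  | nu : ℕ → MuForm Λ → MuForm Λ

/-- A Kripke model over signature `Λ` with set of worlds `W`. -/
structure KModel (Λ W : Type) where
  R : Λ → W → W → Prop
  V : ℕ → Set W

namespace MuForm

variable {Λ W : Type}

/-- The valuation `‖φ‖^M` of a μ-formula, where `env` interprets the variables;
least and greatest fixed points are taken in the complete lattice `Set W`. -/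
def sem (M : KModel Λ W) (env : ℕ → Set W) : MuForm Λ → Set W
  | prop p => M.V p
  | nprop p => (M.V p)ᶜ
  | var x => env x
  | and a b => sem M env a ∩ sem M env b
  | or a b => sem M env a ∪ sem M env b
  | box i a => {w | ∀ v, M.R i w v → v ∈ sem M env a}
  | dia i a => {w | ∃ v, M.R i w v ∧ v ∈ sem M env a}
  | mu x a => sInf {A : Set W | sem M (Function.update env x A) a ⊆ A}
  | nu x a => sSup {A : Set W | A ⊆ sem M (Function.update env x A) a}

/-- Free variables of a μ-formula. -/
def freeVars : MuForm Λ → Set ℕ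
  | prop _ => ∅
  | nprop _ => ∅
  | var x => {x}
  | and a b => freeVars a ∪ freeVars b
  | or a b => freeVars a ∪ freeVars b
  | box _ a => freeVars a
  | dia _ a => freeVars a
  | mu x a => freeVars a \ {x}
  | nu x a => freeVars a \ {x}

/-- A μ-formula contains no fixed-point operators. -/
def noFix : MuForm Λ → Prop
  | prop _ => True
  | nprop _ => True
  | var _ => True
  | and a b => noFix a ∧ noFix b
  | or a b => noFix a ∧ noFix b
  | box _ a => noFix a
  | dia _ a => noFix a
  | mu _ _ => False
  | nu _ _ => False

/-- The list of subformulas of a μ-formula. -/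
def subfs : MuForm Λ → List (MuForm Λ)
  | prop p => [prop p]
  | nprop p => [nprop p]
  | var x => [var x]
  | and a b => (and a b) :: (subfs a ++ subfs b)
  | or a b => (or a b) :: (subfs a ++ subfs b)
  | box i a => (box i a) :: subfs a
  | dia i a => (dia i a) :: subfs a
  | mu x a => (mu x a) :: subfs a
  | nu x a => (nu x a) :: subfs a

/-- Substitution of `ψ` for the free occurrences of the variable `X`. -/
def subst (X : ℕ) (ψ : MuForm Λ) : MuForm Λ → MuForm Λ
  | prop p => prop p
  | nprop p => nprop p
  | var y => if y = X then ψ else var y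
  | and a b => and (subst X ψ a) (subst X ψ b)
  | or a b => or (subst X ψ a) (subst X ψ b)
  | box i a => box i (subst X ψ a)
  | dia i a => dia i (subst X ψ a)
  | mu y a => if y = X then mu y a else mu y (subst X ψ a)
  | nu y a => if y = X then nu y a else nu y (subst X ψ a)

/-- The substitution of `ψ` for `X` is capture-free: no free variable of `ψ`
becomes bound when substituting `ψ` for the free occurrences of `X`. -/
def CaptureFree (X : ℕ) (ψ : MuForm Λ) : MuForm Λ → Prop
  | prop _ => True
  | nprop _ => True
  | var _ => True
  | and a b => CaptureFree X ψ a ∧ CaptureFree X ψ b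
  | or a b => CaptureFree X ψ a ∧ CaptureFree X ψ b
  | box _ a => CaptureFree X ψ a
  | dia _ a => CaptureFree X ψ a
  | mu y a => y = X ∨ ((X ∈ freeVars a → y ∉ freeVars ψ) ∧ CaptureFree X ψ a)
  | nu y a => y = X ∨ ((X ∈ freeVars a → y ∉ freeVars ψ) ∧ CaptureFree X ψ a)

/-- Number of occurrences of the variable `X`. -/
def varCnt (X : ℕ) : MuForm Λ → ℕ
  | prop _ => 0
  | nprop _ => 0
  | var y => if y = X then 1 else 0
  | and a b => varCnt X a + varCnt X b
  | or a b => varCnt X a + varCnt X b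
  | box _ a => varCnt X a
  | dia _ a => varCnt X a
  | mu _ a => varCnt X a
  | nu _ a => varCnt X a

/-- Number of fixed-point binders binding the variable `X`. -/
def bndCnt (X : ℕ) : MuForm Λ → ℕ
  | prop _ => 0
  | nprop _ => 0
  | var _ => 0
  | and a b => bndCnt X a + bndCnt X b
  | or a b => bndCnt X a + bndCnt X b
  | box _ a => bndCnt X a
  | dia _ a => bndCnt X a
  | mu y a => (if y = X then 1 else 0) + bndCnt X a
  | nu y a => (if y = X then 1 else 0) + bndCnt X a

end MuForm

/-- Each variable has at most one occurrence, is bound by at most one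
fixed-point operator, and no variable occurs free. -/
def WellNamed {Λ : Type} (φ : MuForm Λ) : Prop :=
  (∀ X : ℕ, MuForm.varCnt X φ ≤ 1 ∧ MuForm.bndCnt X φ ≤ 1) ∧ MuForm.freeVars φ = ∅

/- ### The alternation hierarchy Σ^μ_n / Π^μ_n -/

mutual
  /-- The class `Σ^μ_n` of the alternation hierarchy. -/
  inductive SigmaMu {Λ : Type} : ℕ → MuForm Λ → Prop where
    | base {φ : MuForm Λ} : φ.noFix → SigmaMu 0 φ
    | upS {n : ℕ} {φ : MuForm Λ} : SigmaMu n φ → SigmaMu (n + 1) φ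
    | upP {n : ℕ} {φ : MuForm Λ} : PiMu n φ → SigmaMu (n + 1) φ
    | andI {n : ℕ} {a b : MuForm Λ} :
        SigmaMu (n + 1) a → SigmaMu (n + 1) b → SigmaMu (n + 1) (MuForm.and a b)
    | orI {n : ℕ} {a b : MuForm Λ} :
        SigmaMu (n + 1) a → SigmaMu (n + 1) b → SigmaMu (n + 1) (MuForm.or a b)
    | boxI {n : ℕ} {i : Λ} {a : MuForm Λ} :
        SigmaMu (n + 1) a → SigmaMu (n + 1) (MuForm.box i a)
    | diaI {n : ℕ} {i : Λ} {a : MuForm Λ} :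
        SigmaMu (n + 1) a → SigmaMu (n + 1) (MuForm.dia i a)
    | muI {n : ℕ} {X : ℕ} {a : MuForm Λ} :
        SigmaMu (n + 1) a → SigmaMu (n + 1) (MuForm.mu X a)
    | substI {n : ℕ} {X : ℕ} {a ψ : MuForm Λ} :
        SigmaMu (n + 1) a → SigmaMu (n + 1) ψ → MuForm.CaptureFree X ψ a →
        SigmaMu (n + 1) (MuForm.subst X ψ a)

  /-- The class `Π^μ_n` of the alternation hierarchy. -/
  inductive PiMu {Λ : Type} : ℕ → MuForm Λ → Prop where
    | base {φ : MuForm Λ} : φ.noFix → PiMu 0 φ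
    | upS {n : ℕ} {φ : MuForm Λ} : SigmaMu n φ → PiMu (n + 1) φ
    | upP {n : ℕ} {φ : MuForm Λ} : PiMu n φ → PiMu (n + 1) φ
    | andI {n : ℕ} {a b : MuForm Λ} :
        PiMu (n + 1) a → PiMu (n + 1) b → PiMu (n + 1) (MuForm.and a b)
    | orI {n : ℕ} {a b : MuForm Λ} :
        PiMu (n + 1) a → PiMu (n + 1) b → PiMu (n + 1) (MuForm.or a b)
    | boxI {n : ℕ} {i : Λ} {a : MuForm Λ} :
        PiMu (n + 1) a → PiMu (n + 1) (MuForm.box i a)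
    | diaI {n : ℕ} {i : Λ} {a : MuForm Λ} :
        PiMu (n + 1) a → PiMu (n + 1) (MuForm.dia i a)
    | nuI {n : ℕ} {X : ℕ} {a : MuForm Λ} :
        PiMu (n + 1) a → PiMu (n + 1) (MuForm.nu X a)
    | substI {n : ℕ} {X : ℕ} {a ψ : MuForm Λ} :
        PiMu (n + 1) a → PiMu (n + 1) ψ → MuForm.CaptureFree X ψ a →
        PiMu (n + 1) (MuForm.subst X ψ a)
end

/- ### Kripke frames, closure conditions, fusions, equivalence -/

/-- A Kripke frame over the signature `Λ`. -/
structure Frame (Λ : Type) : Type 1 where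
  World : Type
  R : Λ → World → World → Prop

/-- Frame isomorphism. -/
def FrameIso {Λ : Type} (F G : Frame Λ) : Prop :=
  ∃ e : F.World ≃ G.World, ∀ (i : Λ) (w v : F.World), F.R i w v ↔ G.R i (e w) (e v)

/-- A class of frames is closed under isomorphic copies. -/
def ClosedUnderIso {Λ : Type} (C : Set (Frame Λ)) : Prop :=
  ∀ F ∈ C, ∀ G : Frame Λ, FrameIso F G → G ∈ C

/-- Disjoint union of a family of frames. -/
def Frame.disjUnion {Λ ι : Type} (f : ι → Frame Λ) : Frame Λ where
  World := Σ i : ι, (f i).World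
  R m x y :=
    ∃ h : x.1 = y.1, (f y.1).R m (cast (congrArg (fun i => (f i).World) h) x.2) y.2

/-- A class of frames is closed under disjoint unions. -/
def ClosedUnderDU {Λ : Type} (C : Set (Frame Λ)) : Prop :=
  ∀ (ι : Type) (f : ι → Frame Λ), (∀ i, f i ∈ C) → Frame.disjUnion f ∈ C

/-- `∘→∘` is a subframe of the class `C` of unimodal frames. -/
def HasEdge (C : Set (Frame Unit)) : Prop :=
  ∃ F ∈ C, ∃ w0 w1 : F.World, w0 ≠ w1 ∧ F.R () w0 w1

/-- `∘←∘→∘` is a subframe of the class `C` of unimodal frames. -/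
def HasFork (C : Set (Frame Unit)) : Prop :=
  ∃ F ∈ C, ∃ w0 w1 w2 : F.World,
    w0 ≠ w1 ∧ w0 ≠ w2 ∧ w1 ≠ w2 ∧ F.R () w0 w1 ∧ F.R () w0 w2

/-- `∘→∘→∘` is a subframe of the class `C` of unimodal frames. -/
def HasChain2 (C : Set (Frame Unit)) : Prop :=
  ∃ F ∈ C, ∃ w0 w1 w2 : F.World,
    w0 ≠ w1 ∧ w0 ≠ w2 ∧ w1 ≠ w2 ∧ F.R () w0 w1 ∧ F.R () w1 w2

/-- The unimodal reduct of a bimodal frame. -/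
def Frame.reduct2 (F : Frame (Fin 2)) (i : Fin 2) : Frame Unit :=
  ⟨F.World, fun _ => F.R i⟩

/-- Fusion of two classes of unimodal frames (signatures `{0}` and `{1}`). -/
def fusion2 (C0 C1 : Set (Frame Unit)) : Set (Frame (Fin 2)) :=
  {F | F.reduct2 0 ∈ C0 ∧ F.reduct2 1 ∈ C1}

/-- The unimodal reduct of a trimodal frame. -/
def Frame.reduct3 (F : Frame (Fin 3)) (i : Fin 3) : Frame Unit :=
  ⟨F.World, fun _ => F.R i⟩

/-- Fusion of three classes of unimodal frames. -/
def fusion3 (C0 C1 C2 : Set (Frame Unit)) : Set (Frame (Fin 3)) :=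
  {F | F.reduct3 0 ∈ C0 ∧ F.reduct3 1 ∈ C1 ∧ F.reduct3 2 ∈ C2}

/-- Two μ-formulas are equivalent over a class of frames: they have the same
valuation in every model based on a frame of the class. -/
def EquivOver {Λ : Type} (C : Set (Frame Λ)) (φ ψ : MuForm Λ) : Prop :=
  ∀ F ∈ C, ∀ (V : ℕ → Set F.World) (env : ℕ → Set F.World),
    MuForm.sem ⟨F.R, V⟩ env φ = MuForm.sem ⟨F.R, V⟩ env ψ

/- ### Games, strategies, evaluation games, parity games -/

/-- A two-player game on a graph: positions owned by `ownV` belong to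
Verifier/∃, the others to Refuter/∀; `winV` decides infinite plays.
A player who cannot move loses. -/
structure Game (Pos : Type) where
  init : Pos
  ownV : Pos → Prop
  move : Pos → Pos → Prop
  winV : (ℕ → Pos) → Prop

/-- The history (current position first) of an infinite play after `n` steps. -/
def histN {Pos : Type} (p : ℕ → Pos) (n : ℕ) : List Pos :=
  ((List.range (n + 1)).map p).reverse

/-- Finite histories (current position first) of plays in which the player
owning the `own`-positions follows the strategy `σ`. -/
inductive Game.Hist {Pos : Type} (G : Game Pos) (own : Pos → Prop)
    (σ : List Pos → Pos) : List Pos → Prop where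
  | init : Game.Hist G own σ [G.init]
  | smove {l : List Pos} {x : Pos} : Game.Hist G own σ (x :: l) → own x →
      G.move x (σ (x :: l)) → Game.Hist G own σ (σ (x :: l) :: x :: l)
  | omove {l : List Pos} {x y : Pos} : Game.Hist G own σ (x :: l) → ¬ own x →
      G.move x y → Game.Hist G own σ (y :: x :: l)

/-- The player owning the `own`-positions has a winning strategy:
a strategy which always provides a legal move at reachable own positions
(so the player is never stuck) and such that every infinite play following it
satisfies the winning condition `winO`; finite plays in which the opponent is
stuck are automatically won. -/
def Game.WinsFor {Pos : Type} (G : Game Pos) (own : Pos → Prop)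
    (winO : (ℕ → Pos) → Prop) : Prop :=
  ∃ σ : List Pos → Pos,
    (∀ (l : List Pos) (x : Pos), G.Hist own σ (x :: l) → own x →
      G.move x (σ (x :: l))) ∧
    (∀ p : ℕ → Pos, p 0 = G.init → (∀ n, G.move (p n) (p (n + 1))) →
      (∀ n, own (p n) → p (n + 1) = σ (histN p n)) → winO p)

/-- Verifier has a winning strategy. -/
def Game.VWins {Pos : Type} (G : Game Pos) : Prop := G.WinsFor G.ownV G.winV

/-- Refuter has a winning strategy. -/
def Game.RWins {Pos : Type} (G : Game Pos) : Prop :=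
  G.WinsFor (fun x => ¬ G.ownV x) (fun p => ¬ G.winV p)

/-- Ownership of positions in the evaluation game `𝒢(M, w ⊨ φ0)`:
Verifier owns disjunctions, diamonds, μ-formulas, μ-bound variables and
false literals. -/
def evalOwnV {Λ W : Type} (M : KModel Λ W) (φ0 : MuForm Λ) :
    MuForm Λ × W → Prop := fun q =>
  match q with
  | (.or _ _, _) => True
  | (.dia _ _, _) => True
  | (.mu _ _, _) => True
  | (.var X, _) => ∃ a : MuForm Λ, (MuForm.mu X a) ∈ φ0.subfs
  | (.prop p, w) => w ∉ M.V p
  | (.nprop p, w) => w ∈ M.V p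
  | _ => False

/-- Admissible moves in the evaluation game `𝒢(M, w ⊨ φ0)`. -/
def evalMove {Λ W : Type} (M : KModel Λ W) (φ0 : MuForm Λ) :
    MuForm Λ × W → MuForm Λ × W → Prop := fun q r =>
  match q with
  | (.and a b, w) => r = (a, w) ∨ r = (b, w)
  | (.or a b, w) => r = (a, w) ∨ r = (b, w)
  | (.box i a, w) => ∃ v, M.R i w v ∧ r = (a, v)
  | (.dia i a, w) => ∃ v, M.R i w v ∧ r = (a, v)
  | (.mu _ a, w) => r = (a, w)
  | (.nu _ a, w) => r = (a, w)
  | (.var X, w) =>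
      ∃ a : MuForm Λ,
        ((MuForm.mu X a) ∈ φ0.subfs ∧ r = (MuForm.mu X a, w)) ∨
        ((MuForm.nu X a) ∈ φ0.subfs ∧ r = (MuForm.nu X a, w))
  | (.prop _, _) => False
  | (.nprop _, _) => False

/-- The formula `ψ` labels infinitely many positions of the infinite run `p`. -/
def InfOccF {Λ W : Type} (p : ℕ → MuForm Λ × W) (ψ : MuForm Λ) : Prop :=
  ∀ n, ∃ m, n ≤ m ∧ (p m).1 = ψ

/-- Verifier wins an infinite run iff the outermost fixed-point subformula
occurring infinitely often is a ν-formula. -/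
def evalWinV {Λ W : Type} (p : ℕ → MuForm Λ × W) : Prop :=
  ∃ (X : ℕ) (a : MuForm Λ), InfOccF p (MuForm.nu X a) ∧
    ∀ χ : MuForm Λ, InfOccF p χ → χ ∈ (MuForm.nu X a).subfs

/-- The evaluation game `𝒢(M, w ⊨ φ)`. -/
def evalGame {Λ W : Type} (M : KModel Λ W) (w : W) (φ : MuForm Λ) :
    Game (MuForm Λ × W) where
  init := (φ, w)
  ownV := evalOwnV M φ
  move := evalMove M φ
  winV := evalWinV

/-- A parity game. -/
structure PGame : Type 1 where
  Pos : Type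
  ownE : Pos → Prop
  init : Pos
  E : Pos → Pos → Prop
  Ω : Pos → ℕ

/-- The parity `k` occurs infinitely often in the infinite play `p`. -/
def InfOccPar (P : PGame) (p : ℕ → P.Pos) (k : ℕ) : Prop :=
  ∀ n, ∃ m, n ≤ m ∧ P.Ω (p m) = k

/-- A parity game as a game: ∃ wins an infinite play iff the greatest parity
occurring infinitely often is even. -/
def PGame.toGame (P : PGame) : Game P.Pos where
  init := P.init
  ownV := P.ownE
  move := P.E
  winV := fun p => ∃ k, Even k ∧ InfOccPar P p k ∧ ∀ j, InfOccPar P p j → j ≤ k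

/-- Player ∃ wins the parity game. -/
def PGame.ExWins (P : PGame) : Prop := P.toGame.VWins

/-- Player ∀ wins the parity game. -/
def PGame.AWins (P : PGame) : Prop := P.toGame.RWins

/-- The parity of a fixed-point formula: `2(i+ε) − 1` for a μ-formula in
`Σ^μ_{2i+ε} \ Π^μ_{2i+ε}`, `2i` for a ν-formula in `Π^μ_{2i+ε} \ Σ^μ_{2i+ε}`,
and `0` for non fixed-point formulas. -/
noncomputable def fpParity {Λ : Type} : MuForm Λ → ℕ := fun φ =>
  match φ with
  | .mu _ _ =>
      (fun ℓ => if Even ℓ then ℓ - 1 else ℓ) (sInf {k | SigmaMu k φ ∧ ¬ PiMu k φ})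
  | .nu _ _ =>
      (fun ℓ => if Even ℓ then ℓ else ℓ - 1) (sInf {k | PiMu k φ ∧ ¬ SigmaMu k φ})
  | _ => 0

/-- The evaluation game `𝒢(M, w ⊨ φ)` presented as the parity game
`𝒢^P(M, w ⊨ φ)`. -/
noncomputable def evalPGame {Λ W : Type} (M : KModel Λ W) (w : W)
    (φ : MuForm Λ) : PGame where
  Pos := MuForm Λ × W
  ownE := evalOwnV M φ
  init := (φ, w)
  E := evalMove M φ
  Ω := fun q => fpParity q.1

/- ### Tree unfolding of a parity game -/

/-- Finite `E`-paths of a parity game starting at the initial position,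
presented as (last vertex, reversed list of earlier vertices). -/
inductive IsUPath (P : PGame) : P.Pos × List P.Pos → Prop where
  | init : IsUPath P (P.init, [])
  | cons {u : P.Pos} {t : List P.Pos} {v : P.Pos} :
      IsUPath P (u, t) → P.E u v → IsUPath P (v, u :: t)

/-- The tree unfolding of a parity game: positions are the finite `E`-paths
starting at the initial position, with ownership and parity inherited from
the last vertex. -/
def PGame.unfold (P : PGame) : PGame where
  Pos := {q : P.Pos × List P.Pos // IsUPath P q}
  ownE := fun q => P.ownE q.val.1
  init := ⟨(P.init, []), IsUPath.init⟩
  E := fun q r => r.val.2 = q.val.1 :: q.val.2 ∧ P.E q.val.1 r.val.1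
  Ω := fun q => P.Ω q.val.1

/- ### The Kripke encoding of parity games and the formulas W_n -/

/- Propositional indices used for the encoding:
`bd = 0`, `pos = 1`, `pre₀ = 2`, `nxt₀ = 3`, `pre₁ = 4`, `nxt₁ = 5`,
`P_∃ = 6`, `P_∀ = 7`, `P_j = 8 + j`. -/

/-- Worlds of the Kripke model encoding a parity game: a world `pos v` for
each position `v`, and intermediate choice/confirmation worlds `mid u u'`
for the edges. -/
inductive EncW (Pos : Type) : Type where
  | pos : Pos → EncW Pos
  | mid : Pos → Pos → EncW Pos

/-- Choice steps (`R₀`) of the encoding. -/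
def encR0 (P : PGame) : EncW P.Pos → EncW P.Pos → Prop
  | EncW.pos v, EncW.mid u u' => v = u ∧ P.E u u'
  | _, _ => False

/-- Confirmation steps (`R₁`) of the encoding. -/
def encR1 (P : PGame) : EncW P.Pos → EncW P.Pos → Prop
  | EncW.mid u u', EncW.pos v => v = u' ∧ P.E u u'
  | _, _ => False

/-- Valuation of the encoding. -/
def encV (P : PGame) : ℕ → Set (EncW P.Pos) := fun n =>
  if n = 0 then Set.univ                                         -- bd
  else if n = 1 then {x | ∃ v, x = EncW.pos v}                   -- pos
  else if n = 2 then {x | ∃ v, x = EncW.pos v}                   -- pre₀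
  else if n = 3 then {x | ∃ u u', x = EncW.mid u u'}             -- nxt₀
  else if n = 4 then {x | ∃ u u', x = EncW.mid u u'}             -- pre₁
  else if n = 5 then {x | ∃ v, x = EncW.pos v}                   -- nxt₁
  else if n = 6 then {x | ∃ v, x = EncW.pos v ∧ P.ownE v}        -- P_∃
  else if n = 7 then {x | ∃ v, x = EncW.pos v ∧ ¬ P.ownE v}      -- P_∀
  else {x | ∃ v, x = EncW.pos v ∧ P.Ω v = n - 8}                 -- P_{n-8}

/-- The bimodal Kripke model `P^K` encoding the parity game `P`. -/
def encModel (P : PGame) : KModel (Fin 2) (EncW P.Pos) where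
  R := fun i => if i = 0 then encR0 P else encR1 P
  V := encV P

/-- `♦φ := νY. pre₀ ∧ bd ∧ ◇₀(nxt₀ ∧ pre₁ ∧ bd ∧ ◇₁(nxt₁ ∧ bd ∧
((Y ∧ ¬pos) ∨ (φ ∧ pos))))`. -/
def DiamW (Y : ℕ) (φ : MuForm (Fin 2)) : MuForm (Fin 2) :=
  .nu Y (.and (.prop 2) (.and (.prop 0)
    (.dia 0 (.and (.prop 3) (.and (.prop 4) (.and (.prop 0)
      (.dia 1 (.and (.prop 5) (.and (.prop 0)
        (.or (.and (.var Y) (.nprop 1)) (.and φ (.prop 1))))))))))))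

/-- `■φ := νY. (pre₀ ∧ bd → □₀(nxt₀ ∧ pre₁ ∧ bd → □₁(nxt₁ ∧ bd →
((Y ∧ ¬pos) ∧ (φ ∧ pos)))))`, implications written disjunctively. -/
def BoxW (Y : ℕ) (φ : MuForm (Fin 2)) : MuForm (Fin 2) :=
  .nu Y (.or (.or (.nprop 2) (.nprop 0))
    (.box 0 (.or (.or (.nprop 3) (.or (.nprop 4) (.nprop 0)))
      (.box 1 (.or (.or (.nprop 5) (.nprop 0))
        (.and (.and (.var Y) (.nprop 1)) (.and φ (.prop 1))))))))

/-- The `j`-th disjunct `(P_j ∧ P_∃ ∧ ♦X_j) ∨ (P_j ∧ P_∀ ∧ ■X_j)`. -/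
def WDisj (Y j : ℕ) : MuForm (Fin 2) :=
  .or (.and (.prop (8 + j)) (.and (.prop 6) (DiamW Y (.var j))))
      (.and (.prop (8 + j)) (.and (.prop 7) (BoxW Y (.var j))))

/-- The disjunction `⋁_{0 ≤ j ≤ n} [(P_j ∧ P_∃ ∧ ♦X_j) ∨ (P_j ∧ P_∀ ∧ ■X_j)]`. -/
def WBody (Y : ℕ) : ℕ → MuForm (Fin 2)
  | 0 => WDisj Y 0
  | j + 1 => .or (WBody Y (j)) (WDisj Y (j + 1))

/-- The alternating block of binders `ηX_n … νX_2 μX_1 νX_0`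
(`νX_j` for even `j`, `μX_j` for odd `j`). -/
def WBind : ℕ → MuForm (Fin 2) → MuForm (Fin 2)
  | 0, φ => .nu 0 φ
  | j + 1, φ =>
      if Even (j + 1) then .nu (j + 1) (WBind j φ) else .mu (j + 1) (WBind j φ)

/-- The winning region formula
`W_n := ηX_n … νX_2 μX_1 νX_0. ⋁_{0≤j≤n} [(P_j ∧ P_∃ ∧ ♦X_j) ∨ (P_j ∧ P_∀ ∧ ■X_j)]`,
where the fresh variable `Y` of `♦`/`■` is `n + 1`. -/
def Wfml (n : ℕ) : MuForm (Fin 2) := WBind n (WBody (n + 1) n)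

/- ### Pointed bimodal models, restriction, isomorphisms, the map f_φ -/

/-- A pointed bimodal Kripke model. -/
structure PModel : Type 1 where
  World : Type
  R0 : World → World → Prop
  R1 : World → World → Prop
  V : ℕ → Set World
  pt : World

/-- The underlying bimodal Kripke model. -/
def PModel.toK (M : PModel) : KModel (Fin 2) M.World :=
  ⟨fun i => if i = 0 then M.R0 else M.R1, M.V⟩

/-- The edges of the graph of a pointed bimodal model. -/
def PModel.edge (M : PModel) (x y : M.World) : Prop := M.R0 x y ∨ M.R1 x y

/-- The graph of the model has no loops. -/
def PModel.Acyclic (M : PModel) : Prop :=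
  ∀ x : M.World, ¬ Relation.TransGen M.edge x x

/-- Reachability in at most `k` steps. -/
def stepsLe (M : PModel) : ℕ → M.World → M.World → Prop
  | 0 => fun x y => x = y
  | k + 1 => fun x y => stepsLe M k x y ∨ ∃ u, stepsLe M k x u ∧ M.edge u y

/-- The worlds at distance less than `n` from the distinguished point. -/
def PModel.ball (M : PModel) (n : ℕ) : Set M.World :=
  {v | ∃ k, k + 1 ≤ n ∧ stepsLe M k M.pt v}

/-- `e` is an isomorphism between the restrictions `(M↾n, w)` and `(M'↾n, w')`,
i.e. an `n`-isomorphism. -/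
structure IsNIso (M M' : PModel) (n : ℕ)
    (e : {x // x ∈ M.ball n} ≃ {x // x ∈ M'.ball n}) : Prop where
  pt : ∀ hx : M.pt ∈ M.ball n, (e ⟨M.pt, hx⟩).val = M'.pt
  r0 : ∀ x y : {x // x ∈ M.ball n}, M.R0 x.val y.val ↔ M'.R0 (e x).val (e y).val
  r1 : ∀ x y : {x // x ∈ M.ball n}, M.R1 x.val y.val ↔ M'.R1 (e x).val (e y).val
  vals : ∀ (p : ℕ) (x : {x // x ∈ M.ball n}), x.val ∈ M.V p ↔ (e x).val ∈ M'.V p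

/-- The pointed models are `n`-isomorphic. -/
def NIsomorphic (M M' : PModel) (n : ℕ) : Prop := ∃ e, IsNIso M M' n e

/-- `e` is an isomorphism of pointed bimodal models. -/
structure IsIsoP (M M' : PModel) (e : M.World ≃ M'.World) : Prop where
  pt : e M.pt = M'.pt
  r0 : ∀ x y : M.World, M.R0 x y ↔ M'.R0 (e x) (e y)
  r1 : ∀ x y : M.World, M.R1 x y ↔ M'.R1 (e x) (e y)
  vals : ∀ (p : ℕ) (x : M.World), x ∈ M.V p ↔ e x ∈ M'.V p

/-- The pointed models are isomorphic. -/
def IsomorphicP (M M' : PModel) : Prop := ∃ e, IsIsoP M M' e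

/-- The map `f_φ` sending a pointed bimodal model `(M, w)` to the pointed
Kripke model `(𝒢^K(M, w ⊨ φ), ⟨φ, w⟩)` representing its evaluation game,
where `𝒢^K(M, w ⊨ φ) = (𝒢^P(M, w ⊨ φ))^K`. -/
noncomputable def fGame (φ : MuForm (Fin 2)) (M : PModel) : PModel where
  World := EncW (MuForm (Fin 2) × M.World)
  R0 := encR0 (evalPGame M.toK M.pt φ)
  R1 := encR1 (evalPGame M.toK M.pt φ)
  V := encV (evalPGame M.toK M.pt φ)
  pt := EncW.pos (φ, M.pt)

/- ### Modal logics, fusions of logics, GLP -/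

/-- Modal formulas (no fixed points) over a signature `I`, with full
implication and falsum. -/
inductive MForm (I : Type) : Type where
  | prop : ℕ → MForm I
  | fls : MForm I
  | imp : MForm I → MForm I → MForm I
  | box : I → MForm I → MForm I

namespace MForm

variable {I : Type}

def neg (a : MForm I) : MForm I := a.imp .fls

def conj (a b : MForm I) : MForm I := (a.imp b.neg).neg

def diam (i : I) (a : MForm I) : MForm I := (MForm.box i a.neg).neg

def iff (a b : MForm I) : MForm I := conj (a.imp b) (b.imp a)

/-- Kripke semantics for modal formulas. -/
def semM {W : Type} (R : I → W → W → Prop) (V : ℕ → Set W) : MForm I → Set W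
  | prop p => V p
  | fls => ∅
  | imp a b => {w | w ∈ semM R V a → w ∈ semM R V b}
  | box i a => {w | ∀ v, R i w v → v ∈ semM R V a}

/-- Uniform substitution of formulas for propositional symbols. -/
def substP (σ : ℕ → MForm I) : MForm I → MForm I
  | prop p => σ p
  | fls => fls
  | imp a b => imp (substP σ a) (substP σ b)
  | box i a => box i (substP σ a)

/-- The formula only uses modalities from `S`. -/
def UsesOnly (S : Set I) : MForm I → Prop
  | prop _ => True
  | fls => True
  | imp a b => UsesOnly S a ∧ UsesOnly S b
  | box i a => i ∈ S ∧ UsesOnly S a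

/-- The propositional symbol `x` occurs in the formula. -/
def PropOccurs (x : ℕ) : MForm I → Prop
  | prop p => p = x
  | fls => False
  | imp a b => PropOccurs x a ∨ PropOccurs x b
  | box _ a => PropOccurs x a

/-- Every occurrence of the propositional symbol `x` is within the scope of
some modality. -/
def Guarded (x : ℕ) : MForm I → Prop
  | prop p => p ≠ x
  | fls => True
  | imp a b => Guarded x a ∧ Guarded x b
  | box _ _ => True

end MForm

/-- Propositional tautologies: formulas true under every boolean valuation
treating propositional symbols and boxed formulas as atoms. -/
def IsTaut {I : Type} (φ : MForm I) : Prop :=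
  ∀ val : MForm I → Prop, ¬ val .fls →
    (∀ a b : MForm I, val (a.imp b) ↔ (val a → val b)) → val φ

/-- A modal formula is valid on a frame: it holds at every world under
every valuation. -/
def ValidOn {I : Type} (F : Frame I) (φ : MForm I) : Prop :=
  ∀ (V : ℕ → Set F.World) (w : F.World), w ∈ MForm.semM F.R V φ

/-- `L` is a normal modal logic in the signature `S`. -/
structure IsNormalIn {I : Type} (S : Set I) (L : Set (MForm I)) : Prop where
  inSig : ∀ φ ∈ L, MForm.UsesOnly S φ
  taut : ∀ φ : MForm I, MForm.UsesOnly S φ → IsTaut φ → φ ∈ L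
  axK : ∀ i ∈ S, ∀ a b : MForm I, MForm.UsesOnly S a → MForm.UsesOnly S b →
    ((MForm.box i (a.imp b)).imp ((MForm.box i a).imp (MForm.box i b))) ∈ L
  mp : ∀ a b : MForm I, a ∈ L → (a.imp b) ∈ L → b ∈ L
  nec : ∀ i ∈ S, ∀ a : MForm I, a ∈ L → MForm.box i a ∈ L
  subst : ∀ σ : ℕ → MForm I, (∀ p, MForm.UsesOnly S (σ p)) →
    ∀ a ∈ L, a.substP σ ∈ L

/-- The fusion of a family of modal logics: the smallest normal modal logic
in the combined signature containing each of them. -/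
def FusionLogic {I J : Type} (Ls : J → Set (MForm I)) : Set (MForm I) :=
  ⋂₀ {L : Set (MForm I) | IsNormalIn Set.univ L ∧ ∀ j, Ls j ⊆ L}

/-- Extension of a frame for the `j`-th component signature to the full
signature (the other relations are empty; validity of formulas in the
component signature is unaffected). -/
def extendFrame {I J : Type} (c : I → J) (j : J)
    (F : Frame {i : I // c i = j}) : Frame I :=
  ⟨F.World, fun i w v => ∃ h : c i = j, F.R ⟨i, h⟩ w v⟩

/-- The reduct of a frame for the full signature to the `j`-th component. -/
def Frame.reductTo {I J : Type} (c : I → J) (j : J) (F : Frame I) :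
    Frame {i : I // c i = j} :=
  ⟨F.World, fun i => F.R i.val⟩

/-- `L` is characterized by the class `Fs` of frames in the `j`-th component
signature: `L` consists exactly of the formulas of that signature valid on
every frame of `Fs`. -/
def CharacterizedBy {I J : Type} (c : I → J) (j : J) (L : Set (MForm I))
    (Fs : Set (Frame {i : I // c i = j})) : Prop :=
  L = {φ | MForm.UsesOnly {i | c i = j} φ ∧
        ∀ F ∈ Fs, ValidOn (extendFrame c j F) φ}

/-- The fusion of classes of frames in pairwise disjoint signatures. -/
def FusionFrames {I J : Type} (c : I → J)
    (Fs : ∀ j : J, Set (Frame {i : I // c i = j})) : Set (Frame I) :=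
  {F | ∀ j, F.reductTo c j ∈ Fs j}

/-- The finite model property for a logic in signature `S`. -/
def HasFMP {I : Type} (S : Set I) (L : Set (MForm I)) : Prop :=
  ∀ φ : MForm I, MForm.UsesOnly S φ → φ ∉ L →
    ∃ (W : Type) (_ : Finite W) (R : I → W → W → Prop) (V : ℕ → Set W),
      (∀ ψ ∈ L, ∀ w : W, w ∈ MForm.semM R V ψ) ∧ ∃ w : W, w ∉ MForm.semM R V φ

/-- The provability logic `GLP` (signature `ℕ`). -/
inductive GLPthm : MForm ℕ → Prop where
  | taut {φ : MForm ℕ} : IsTaut φ → GLPthm φ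
  | axK (n : ℕ) (a b : MForm ℕ) :
      GLPthm ((MForm.box n (a.imp b)).imp ((MForm.box n a).imp (MForm.box n b)))
  | axLob (n : ℕ) (a : MForm ℕ) :
      GLPthm ((MForm.box n ((MForm.box n a).imp a)).imp (MForm.box n a))
  | axMono {m n : ℕ} (h : m ≤ n) (a : MForm ℕ) :
      GLPthm ((MForm.box m a).imp (MForm.box n a))
  | axStab {m n : ℕ} (h : m ≤ n) (a : MForm ℕ) :
      GLPthm ((MForm.box m a).imp (MForm.box n (MForm.box m a)))
  | axStabD {m n : ℕ} (h : m ≤ n) (a : MForm ℕ) :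
      GLPthm ((MForm.diam m a).imp (MForm.box n (MForm.diam m a)))
  | mp {a b : MForm ℕ} : GLPthm (a.imp b) → GLPthm a → GLPthm b
  | nec (n : ℕ) {a : MForm ℕ} : GLPthm a → GLPthm (MForm.box n a)
  | subst (σ : ℕ → MForm ℕ) {a : MForm ℕ} : GLPthm a → GLPthm (a.substP σ)

/- ### Frame classes for the standard modal logics -/

def FK : Set (Frame Unit) := Set.univ
def FK4 : Set (Frame Unit) := {F | Transitive (F.R ())}
def FS4 : Set (Frame Unit) := {F | Reflexive (F.R ()) ∧ Transitive (F.R ())}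
def FKD45 : Set (Frame Unit) :=
  {F | (∀ w, ∃ v, F.R () w v) ∧ Transitive (F.R ()) ∧
    (∀ w v u, F.R () w v → F.R () w u → F.R () v u)}
def FS5 : Set (Frame Unit) := {F | Equivalence (F.R ())}
def FGL : Set (Frame Unit) :=
  {F | Transitive (F.R ()) ∧ ¬ ∃ f : ℕ → F.World, ∀ k, F.R () (f k) (f (k + 1))}

/-!
An `n`-isomorphism `f` from `(M↾n, w)` to `(M'↾n, w')` lifts to an `(n+1)`-isomorphism
`⟨χ, v⟩ ↦ ⟨χ, f v⟩` from `f_{φ∧φ}(M, w)` to `f_{φ∧φ}(M', w')`. Every world at distance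
`k ≤ n` from the root of `𝒢^K(M, w ⊨ φ ∧ φ)` is a game position reached after at most `k/2`
moves, or a choice world between such a position and one of its successors. A move changes the
world of a position by at most one edge, and the first move out of `⟨φ ∧ φ, w⟩` does not change
it at all, so a position reached after `j ≥ 1` moves lies at distance less than `j` from `w`.
Hence all positions involved live in `M↾n`, where `f` preserves the relations and valuations
that the moves, the ownership and the parities of the evaluation game depend on. Induction on
`n`, starting from the empty `0`-isomorphism, gives the theorem.
-/

open Set

namespace PModel

variable {M : PModel}

lemma stepsLe_mono {j k : ℕ} (hjk : j ≤ k) {x y : M.World} (h : stepsLe M j x y) :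
    stepsLe M k x y := by
  induction k, hjk using Nat.le_induction with
  | base => exact h
  | succ k _ ih => exact Or.inl ih

lemma stepsLe_succ_of_edge {k : ℕ} {x y z : M.World} (h : stepsLe M k x y)
    (he : M.edge y z) : stepsLe M (k + 1) x z :=
  Or.inr ⟨y, h, he⟩

lemma mem_ball_succ_iff {n : ℕ} {x : M.World} : x ∈ M.ball (n + 1) ↔ stepsLe M n M.pt x :=
  ⟨fun ⟨_, hk, h⟩ => stepsLe_mono (by omega) h, fun h => ⟨n, le_rfl, h⟩⟩

lemma mem_ball_succ_of_edge {n : ℕ} {x y : M.World} (hx : x ∈ M.ball n) (he : M.edge x y) :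
    y ∈ M.ball (n + 1) :=
  let ⟨k, hk, h⟩ := hx
  ⟨k + 1, by omega, stepsLe_succ_of_edge h he⟩

lemma ball_mono {m n : ℕ} (hmn : m ≤ n) : M.ball m ⊆ M.ball n :=
  fun _ ⟨k, hk, h⟩ => ⟨k, hk.trans hmn, h⟩

lemma ball_zero : M.ball 0 = ∅ :=
  eq_empty_of_forall_notMem fun _ ⟨k, hk, _⟩ => absurd hk (by omega)

lemma pt_mem_ball {n : ℕ} (hn : 1 ≤ n) : M.pt ∈ M.ball n := ⟨0, hn, rfl⟩

lemma edge_of_toK_R {i : Fin 2} {x y : M.World} (h : M.toK.R i x y) : M.edge x y := by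
  fin_cases i
  exacts [Or.inl h, Or.inr h]

end PModel

/-- An `n`-isomorphism presented as a total map of worlds, so that it can act on game
positions componentwise. -/
structure IsBallIso (M M' : PModel) (n : ℕ) (f : M.World → M'.World) : Prop where
  bijOn : BijOn f (M.ball n) (M'.ball n)
  pt : f M.pt = M'.pt
  r0 : ∀ x ∈ M.ball n, ∀ y ∈ M.ball n, M.R0 x y ↔ M'.R0 (f x) (f y)
  r1 : ∀ x ∈ M.ball n, ∀ y ∈ M.ball n, M.R1 x y ↔ M'.R1 (f x) (f y)
  vals : ∀ p, ∀ x ∈ M.ball n, x ∈ M.V p ↔ f x ∈ M'.V p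

namespace IsBallIso

variable {M M' : PModel} {n : ℕ} {f : M.World → M'.World}

lemma nIsomorphic (hf : IsBallIso M M' n f) : NIsomorphic M M' n :=
  ⟨hf.bijOn.equiv f, fun _ => hf.pt, fun x y => hf.r0 x x.2 y y.2,
    fun x y => hf.r1 x x.2 y y.2, fun p x => hf.vals p x x.2⟩

lemma zero (M M' : PModel) : IsBallIso M M' 0 (fun _ => M'.pt) := by
  refine ⟨by simp only [PModel.ball_zero, bijOn_empty], rfl, ?_, ?_, ?_⟩ <;>
    simp [PModel.ball_zero]

lemma toK_R_iff (hf : IsBallIso M M' n f) {i : Fin 2} {x y : M.World}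
    (hx : x ∈ M.ball n) (hy : y ∈ M.ball n) : M.toK.R i x y ↔ M'.toK.R i (f x) (f y) := by
  fin_cases i
  exacts [hf.r0 x hx y hy, hf.r1 x hx y hy]

lemma injOn_insert_pt (hf : IsBallIso M M' n f) : InjOn f (insert M.pt (M.ball n)) := by
  rcases Nat.eq_zero_or_pos n with rfl | hn
  · simp [PModel.ball_zero]
  · rw [insert_eq_of_mem (PModel.pt_mem_ball hn)]
    exact hf.bijOn.injOn

end IsBallIso

-- Outside the ball everything goes to `M'.pt`, which keeps `f M.pt = M'.pt` true for `n = 0`.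
lemma NIsomorphic.exists_isBallIso {M M' : PModel} {n : ℕ} (h : NIsomorphic M M' n) :
    ∃ f, IsBallIso M M' n f := by
  classical
  obtain ⟨e, he⟩ := h
  let f : M.World → M'.World := fun x => if hx : x ∈ M.ball n then e ⟨x, hx⟩ else M'.pt
  have hf : ∀ x (hx : x ∈ M.ball n), f x = e ⟨x, hx⟩ := fun x hx => dif_pos hx
  refine ⟨f, ⟨fun x hx => ?_, fun x hx y hy hxy => ?_, fun y hy => ?_⟩, ?_, ?_, ?_, ?_⟩
  · rw [hf x hx]; exact (e _).2
  · rw [hf x hx, hf y hy] at hxy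
    exact congrArg Subtype.val (e.injective (Subtype.ext hxy))
  · exact ⟨_, (e.symm ⟨y, hy⟩).2, by rw [hf _ (e.symm ⟨y, hy⟩).2]; simp⟩
  · by_cases hpt : M.pt ∈ M.ball n
    · rw [hf _ hpt]; exact he.pt hpt
    · exact dif_neg hpt
  · intro x hx y hy; rw [hf x hx, hf y hy]; exact he.r0 ⟨x, hx⟩ ⟨y, hy⟩
  · intro x hx y hy; rw [hf x hx, hf y hy]; exact he.r1 ⟨x, hx⟩ ⟨y, hy⟩
  · intro p x hx; rw [hf x hx]; exact he.vals p ⟨x, hx⟩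

def EncW.map {α β : Type} (F : α → β) : EncW α → EncW β
  | .pos v => .pos (F v)
  | .mid u v => .mid (F u) (F v)

namespace PGame

def ReachLe (P : PGame) : ℕ → P.Pos → Prop
  | 0 => fun v => v = P.init
  | j + 1 => fun v => P.ReachLe j v ∨ ∃ u, P.ReachLe j u ∧ P.E u v

/-- The pointed model `(P^K, v_I)`; `fGame ψ M` is definitionally
`(evalPGame M.toK M.pt ψ).toPModel`. -/
def toPModel (P : PGame) : PModel where
  World := EncW P.Pos
  R0 := encR0 P
  R1 := encR1 P
  V := encV P
  pt := .pos P.init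

variable {P : PGame}

lemma stepsLe_toPModel_pos {j : ℕ} {v : P.Pos} (hv : P.ReachLe j v) :
    stepsLe P.toPModel (2 * j) P.toPModel.pt (.pos v) := by
  induction j generalizing v with
  | zero => exact hv ▸ rfl
  | succ j ih =>
    rcases hv with hv | ⟨u, hu, huv⟩
    · exact PModel.stepsLe_mono (by omega) (ih hv)
    · have hmid : stepsLe P.toPModel (2 * j + 1) P.toPModel.pt (EncW.mid u v) :=
        PModel.stepsLe_succ_of_edge (ih hu) (Or.inl ⟨rfl, huv⟩)
      exact PModel.stepsLe_succ_of_edge (M := P.toPModel) (y := EncW.mid u v)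
        (z := EncW.pos v) hmid (Or.inr ⟨rfl, huv⟩)

lemma reachLe_of_stepsLe_toPModel {k : ℕ} {x : EncW P.Pos}
    (h : stepsLe P.toPModel k P.toPModel.pt x) :
    (∃ v, x = .pos v ∧ ∃ j, 2 * j ≤ k ∧ P.ReachLe j v) ∨
      (∃ u v, x = .mid u v ∧ ∃ j, 2 * j + 1 ≤ k ∧ P.ReachLe j u ∧ P.E u v) := by
  induction k generalizing x with
  | zero => exact Or.inl ⟨_, h.symm, 0, le_rfl, rfl⟩
  | succ k ih =>
    rcases h with h | ⟨z, hz, he | he⟩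
    · rcases ih h with ⟨v, rfl, j, hj, hv⟩ | ⟨u, v, rfl, j, hj, hu, huv⟩
      exacts [Or.inl ⟨v, rfl, j, by omega, hv⟩, Or.inr ⟨u, v, rfl, j, by omega, hu, huv⟩]
    · cases z <;> cases x <;> simp only [toPModel, encR0] at he
      obtain ⟨rfl, huv⟩ := he
      rcases ih hz with ⟨_, h, j, hj, hv⟩ | ⟨_, _, h, -⟩ <;> cases h
      exact Or.inr ⟨_, _, rfl, j, by omega, hv, huv⟩
    · cases z <;> cases x <;> simp only [toPModel, encR1] at he
      obtain ⟨rfl, huv⟩ := he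
      rcases ih hz with ⟨_, h, -⟩ | ⟨_, _, h, j, hj, hu, -⟩ <;> cases h
      exact Or.inl ⟨_, rfl, j + 1, by omega, Or.inr ⟨_, hu, huv⟩⟩

lemma pos_mem_ball_toPModel_iff {n : ℕ} {v : P.Pos} :
    EncW.pos v ∈ P.toPModel.ball (n + 1) ↔ ∃ j, 2 * j ≤ n ∧ P.ReachLe j v := by
  refine PModel.mem_ball_succ_iff.trans ⟨fun h => ?_, fun ⟨j, hj, hv⟩ =>
    PModel.stepsLe_mono hj (stepsLe_toPModel_pos hv)⟩
  simpa using reachLe_of_stepsLe_toPModel h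

lemma mid_mem_ball_toPModel_iff {n : ℕ} {u v : P.Pos} :
    EncW.mid u v ∈ P.toPModel.ball (n + 1) ↔ ∃ j, 2 * j + 1 ≤ n ∧ P.ReachLe j u ∧ P.E u v := by
  refine PModel.mem_ball_succ_iff.trans ⟨fun h => ?_, fun ⟨j, hj, hu, huv⟩ =>
    PModel.stepsLe_mono hj (PModel.stepsLe_succ_of_edge (M := P.toPModel) (y := EncW.pos u)
      (z := EncW.mid u v) (stepsLe_toPModel_pos hu) (Or.inl ⟨rfl, huv⟩))⟩
  simpa using reachLe_of_stepsLe_toPModel h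

lemma pos_mem_encV_iff {P' : PGame} {v : P.Pos} {v' : P'.Pos} (hown : P.ownE v ↔ P'.ownE v')
    (hΩ : P.Ω v = P'.Ω v') (p : ℕ) : EncW.pos v ∈ encV P p ↔ EncW.pos v' ∈ encV P' p := by
  simp only [encV]
  split_ifs <;> simp [hown, hΩ]

lemma mid_mem_encV_iff {P' : PGame} (u v : P.Pos) (u' v' : P'.Pos) (p : ℕ) :
    EncW.mid u v ∈ encV P p ↔ EncW.mid u' v' ∈ encV P' p := by
  simp only [encV]
  split_ifs <;> simp

end PGame

section EvalGame

variable {M M' : PModel} {n : ℕ} {f : M.World → M'.World} {a b : MuForm (Fin 2)}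

lemma evalMove_snd_eq_or_edge {ψ : MuForm (Fin 2)} {u v : MuForm (Fin 2) × M.World}
    (h : evalMove M.toK ψ u v) : v.2 = u.2 ∨ M.edge u.2 v.2 := by
  obtain ⟨χ, w⟩ := u
  cases χ with
  | prop _ | nprop _ => exact h.elim
  | var _ => obtain ⟨_, ⟨-, rfl⟩ | ⟨-, rfl⟩⟩ := h <;> exact Or.inl rfl
  | and _ _ | or _ _ => rcases h with rfl | rfl <;> exact Or.inl rfl
  | mu _ _ | nu _ _ => subst h; exact Or.inl rfl
  | box _ _ | dia _ _ => obtain ⟨_, hR, rfl⟩ := h; exact Or.inr (PModel.edge_of_toK_R hR)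

namespace PModel

lemma reachLe_and_eq_init_or_mem_ball {j : ℕ}
    {u : MuForm (Fin 2) × M.World} (h : (evalPGame M.toK M.pt (a.and b)).ReachLe j u) :
    u = (a.and b, M.pt) ∨ u.2 ∈ M.ball j := by
  induction j generalizing u with
  | zero => exact Or.inl h
  | succ j ih =>
    rcases h with h | ⟨t, ht, htu⟩
    · exact (ih h).imp_right (ball_mono j.le_succ ·)
    · right
      rcases ih ht with rfl | ht
      · rcases htu with rfl | rfl <;> exact pt_mem_ball (by omega)
      · rcases evalMove_snd_eq_or_edge htu with he | he
        · exact he ▸ ball_mono j.le_succ ht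
        · exact mem_ball_succ_of_edge ht he

lemma reachLe_and_snd_mem_ball {j : ℕ}
    {u : MuForm (Fin 2) × M.World} (h : (evalPGame M.toK M.pt (a.and b)).ReachLe j u)
    (hjn : j ≤ n) (hn : 1 ≤ n) : u.2 ∈ M.ball n := by
  rcases reachLe_and_eq_init_or_mem_ball h with rfl | hu
  exacts [pt_mem_ball hn, ball_mono hjn hu]

lemma eq_init_or_mem_ball_of_pos_mem_ball_fGame {v : MuForm (Fin 2) × M.World}
    (hx : EncW.pos v ∈ (fGame (a.and b) M).ball (n + 1)) :
    v = (a.and b, M.pt) ∨ v.2 ∈ M.ball n := by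
  obtain ⟨j, hj, hv⟩ := (PGame.pos_mem_ball_toPModel_iff (P := evalPGame _ _ _)).mp hx
  exact (reachLe_and_eq_init_or_mem_ball hv).imp_right (ball_mono (by omega) ·)

lemma snd_mem_insert_of_pos_mem_ball_fGame {v : MuForm (Fin 2) × M.World}
    (hx : EncW.pos v ∈ (fGame (a.and b) M).ball (n + 1)) : v.2 ∈ insert M.pt (M.ball n) := by
  rcases eq_init_or_mem_ball_of_pos_mem_ball_fGame hx with rfl | hv
  exacts [mem_insert _ _, mem_insert_of_mem _ hv]

lemma mem_ball_of_mid_mem_ball_fGame {u v : MuForm (Fin 2) × M.World}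
    (hx : EncW.mid u v ∈ (fGame (a.and b) M).ball (n + 1)) :
    u.2 ∈ M.ball n ∧ v.2 ∈ M.ball n := by
  obtain ⟨j, hj, hu, huv⟩ := (PGame.mid_mem_ball_toPModel_iff (P := evalPGame _ _ _)).mp hx
  have hv : (evalPGame M.toK M.pt (a.and b)).ReachLe (j + 1) v := Or.inr ⟨u, hu, huv⟩
  exact ⟨reachLe_and_snd_mem_ball hu (by omega) (by omega),
    reachLe_and_snd_mem_ball hv (by omega) (by omega)⟩

end PModel

namespace IsBallIso

lemma evalMove_map_iff (hf : IsBallIso M M' n f) (ψ : MuForm (Fin 2))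
    {u v : MuForm (Fin 2) × M.World} (hu : u.2 ∈ M.ball n) (hv : v.2 ∈ M.ball n) :
    evalMove M.toK ψ u v ↔ evalMove M'.toK ψ (Prod.map id f u) (Prod.map id f v) := by
  obtain ⟨χ, w⟩ := u
  obtain ⟨χ', w'⟩ := v
  have hinj : f w' = f w ↔ w' = w := hf.bijOn.injOn.eq_iff hv hu
  cases χ <;> simp [evalMove, hinj, hf.toK_R_iff hu hv]

lemma evalOwnV_map_iff (hf : IsBallIso M M' n f) (ψ : MuForm (Fin 2))
    {u : MuForm (Fin 2) × M.World} (hu : u.2 ∈ M.ball n) :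
    evalOwnV M.toK ψ u ↔ evalOwnV M'.toK ψ (Prod.map id f u) := by
  obtain ⟨χ, w⟩ := u
  cases χ <;> simp [evalOwnV, PModel.toK, hf.vals _ w hu]

lemma exists_evalMove_of_evalMove_map (hf : IsBallIso M M' n f) (ψ : MuForm (Fin 2))
    {u : MuForm (Fin 2) × M.World} (hu : u.2 ∈ M.ball n) {v' : MuForm (Fin 2) × M'.World}
    (hv' : v'.2 ∈ M'.ball n) (h : evalMove M'.toK ψ (Prod.map id f u) v') :
    ∃ v, v.2 ∈ M.ball n ∧ evalMove M.toK ψ u v ∧ Prod.map id f v = v' := by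
  obtain ⟨w, hw, hwv⟩ := hf.bijOn.surjOn hv'
  have hFv : Prod.map id f (v'.1, w) = v' := by simp [hwv]
  exact ⟨(v'.1, w), hw, (hf.evalMove_map_iff ψ hu hw).mpr (hFv ▸ h), hFv⟩

lemma injOn_prodMap (hf : IsBallIso M M' n f) :
    InjOn (Prod.map id f) {u : MuForm (Fin 2) × M.World | u.2 ∈ insert M.pt (M.ball n)} :=
  fun _ hu _ hv h => Prod.ext (Prod.ext_iff.mp h).1 (hf.injOn_insert_pt hu hv (Prod.ext_iff.mp h).2)

lemma image_reachLe (hf : IsBallIso M M' n f) (a b : MuForm (Fin 2)) {j : ℕ}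
    (hjn : j ≤ n) :
    Prod.map id f '' {u | (evalPGame M.toK M.pt (a.and b)).ReachLe j u} =
      {u | (evalPGame M'.toK M'.pt (a.and b)).ReachLe j u} := by
  induction j with
  | zero => ext; simp [PGame.ReachLe, evalPGame, hf.pt]
  | succ j ih =>
    have hn : 1 ≤ n := by omega
    replace ih := ih (by omega)
    ext u'
    constructor
    · rintro ⟨u, hu | ⟨t, ht, htu⟩, rfl⟩
      · exact Or.inl (ih.subset (mem_image_of_mem _ hu))
      · have hu : (evalPGame M.toK M.pt (a.and b)).ReachLe (j + 1) u := Or.inr ⟨t, ht, htu⟩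
        refine Or.inr ⟨_, ih.subset (mem_image_of_mem _ ht), ?_⟩
        exact (hf.evalMove_map_iff _ (PModel.reachLe_and_snd_mem_ball ht (by omega) hn)
          (PModel.reachLe_and_snd_mem_ball hu hjn hn)).mp htu
    · rintro (hu' | ⟨t', ht', htu'⟩)
      · obtain ⟨u, hu, rfl⟩ := ih.symm.subset hu'
        exact ⟨u, Or.inl hu, rfl⟩
      · obtain ⟨t, ht, rfl⟩ := ih.symm.subset ht'
        have hu' : (evalPGame M'.toK M'.pt (a.and b)).ReachLe (j + 1) u' := Or.inr ⟨_, ht', htu'⟩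
        obtain ⟨u, -, htu, rfl⟩ := hf.exists_evalMove_of_evalMove_map _
          (PModel.reachLe_and_snd_mem_ball ht (by omega) hn)
          (PModel.reachLe_and_snd_mem_ball hu' hjn hn) htu'
        exact ⟨u, Or.inr ⟨t, ht, htu⟩, rfl⟩

lemma mapsTo_fGame (hf : IsBallIso M M' n f) :
    MapsTo (EncW.map (Prod.map id f)) ((fGame (a.and b) M).ball (n + 1))
      ((fGame (a.and b) M').ball (n + 1)) := by
  rintro (v | ⟨u, v⟩) hx
  · obtain ⟨j, hj, hv⟩ := (PGame.pos_mem_ball_toPModel_iff (P := evalPGame _ _ _)).mp hx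
    exact (PGame.pos_mem_ball_toPModel_iff (P := evalPGame _ _ _)).mpr
      ⟨j, hj, (hf.image_reachLe a b (by omega)).subset (mem_image_of_mem _ hv)⟩
  · obtain ⟨j, hj, hu, huv⟩ := (PGame.mid_mem_ball_toPModel_iff (P := evalPGame _ _ _)).mp hx
    obtain ⟨hu2, hv2⟩ := PModel.mem_ball_of_mid_mem_ball_fGame hx
    exact (PGame.mid_mem_ball_toPModel_iff (P := evalPGame _ _ _)).mpr
      ⟨j, hj, (hf.image_reachLe a b (by omega)).subset (mem_image_of_mem _ hu),
        (hf.evalMove_map_iff _ hu2 hv2).mp huv⟩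

lemma injOn_fGame (hf : IsBallIso M M' n f) :
    InjOn (EncW.map (Prod.map id f)) ((fGame (a.and b) M).ball (n + 1)) := by
  rintro (v | ⟨u, v⟩) hx (v' | ⟨u', v'⟩) hy h <;>
    simp only [EncW.map, EncW.pos.injEq, EncW.mid.injEq, reduceCtorEq] at h
  · rw [hf.injOn_prodMap (PModel.snd_mem_insert_of_pos_mem_ball_fGame hx)
      (PModel.snd_mem_insert_of_pos_mem_ball_fGame hy) h]
  · obtain ⟨hu, hv⟩ := PModel.mem_ball_of_mid_mem_ball_fGame hx
    obtain ⟨hu', hv'⟩ := PModel.mem_ball_of_mid_mem_ball_fGame hy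
    rw [hf.injOn_prodMap (mem_insert_of_mem _ hu) (mem_insert_of_mem _ hu') h.1,
      hf.injOn_prodMap (mem_insert_of_mem _ hv) (mem_insert_of_mem _ hv') h.2]

lemma surjOn_fGame (hf : IsBallIso M M' n f) :
    SurjOn (EncW.map (Prod.map id f)) ((fGame (a.and b) M).ball (n + 1))
      ((fGame (a.and b) M').ball (n + 1)) := by
  rintro (v' | ⟨u', v'⟩) hy
  · obtain ⟨j, hj, hv'⟩ := (PGame.pos_mem_ball_toPModel_iff (P := evalPGame _ _ _)).mp hy
    obtain ⟨v, hv, rfl⟩ := (hf.image_reachLe a b (by omega)).symm.subset hv'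
    exact ⟨.pos v, (PGame.pos_mem_ball_toPModel_iff (P := evalPGame _ _ _)).mpr ⟨j, hj, hv⟩, rfl⟩
  · obtain ⟨j, hj, hu', huv'⟩ := (PGame.mid_mem_ball_toPModel_iff (P := evalPGame _ _ _)).mp hy
    obtain ⟨u, hu, rfl⟩ := (hf.image_reachLe a b (by omega)).symm.subset hu'
    obtain ⟨-, hv'2⟩ := PModel.mem_ball_of_mid_mem_ball_fGame hy
    obtain ⟨v, -, huv, rfl⟩ := hf.exists_evalMove_of_evalMove_map _
      (PModel.reachLe_and_snd_mem_ball hu (by omega) (by omega)) hv'2 huv'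
    exact ⟨.mid u v, (PGame.mid_mem_ball_toPModel_iff (P := evalPGame _ _ _)).mpr
      ⟨j, hj, hu, huv⟩, rfl⟩

lemma fGame_and (hf : IsBallIso M M' n f) :
    IsBallIso (fGame (a.and b) M) (fGame (a.and b) M') (n + 1) (EncW.map (Prod.map id f)) := by
  refine ⟨⟨hf.mapsTo_fGame, hf.injOn_fGame, hf.surjOn_fGame⟩, by simp [fGame, EncW.map, hf.pt],
    ?_, ?_, ?_⟩
  · rintro (v | ⟨u, u'⟩) hx (w | ⟨v', v''⟩) hy <;> try exact Iff.rfl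
    obtain ⟨hv', hv''⟩ := PModel.mem_ball_of_mid_mem_ball_fGame hy
    exact and_congr (hf.injOn_prodMap.eq_iff (PModel.snd_mem_insert_of_pos_mem_ball_fGame hx)
      (mem_insert_of_mem _ hv')).symm (hf.evalMove_map_iff _ hv' hv'')
  · rintro (u | ⟨u, u'⟩) hx (w | ⟨v', v''⟩) hy <;> try exact Iff.rfl
    obtain ⟨hu, hu'⟩ := PModel.mem_ball_of_mid_mem_ball_fGame hx
    exact and_congr (hf.injOn_prodMap.eq_iff (PModel.snd_mem_insert_of_pos_mem_ball_fGame hy)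
      (mem_insert_of_mem _ hu')).symm (hf.evalMove_map_iff _ hu hu')
  · rintro p (v | ⟨u, u'⟩) hx
    · refine PGame.pos_mem_encV_iff (P := evalPGame M.toK M.pt (a.and b))
        (P' := evalPGame M'.toK M'.pt (a.and b)) ?_ rfl p
      rcases PModel.eq_init_or_mem_ball_of_pos_mem_ball_fGame hx with rfl | hv
      · exact Iff.rfl
      · exact hf.evalOwnV_map_iff _ hv
    · exact PGame.mid_mem_encV_iff _ _ _ _ p

end IsBallIso

end EvalGame

lemma NIsomorphic.fGame_and {M M' : PModel} {n : ℕ} (h : NIsomorphic M M' n)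
    (a b : MuForm (Fin 2)) :
    NIsomorphic (fGame (a.and b) M) (fGame (a.and b) M') (n + 1) :=
  let ⟨_, hf⟩ := h.exists_isBallIso
  hf.fGame_and.nIsomorphic

/-- For the sequence `(M_{k+1}, w_{k+1}) = f_{φ∧φ}(M_k, w_k)`
starting from an arbitrary pointed model, `(M_n, w_n)` and `(M_m, w_m)` are
`n`-isomorphic for all `m > n`. -/
theorem iterates_are_n_isomorphic (φ : MuForm (Fin 2)) (M0 : PModel)
    (hM0 : M0.Acyclic) (m n : ℕ) (h : n < m) :
    NIsomorphic ((fGame (MuForm.and φ φ))^[n] M0)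
      ((fGame (MuForm.and φ φ))^[m] M0) n := by
  induction n generalizing m with
  | zero => exact (IsBallIso.zero _ _).nIsomorphic
  | succ n ih =>
    obtain ⟨m, rfl⟩ : ∃ m', m = m' + 1 := ⟨m - 1, by omega⟩
    rw [Function.iterate_succ_apply', Function.iterate_succ_apply']
    exact (ih m (by omega)).fGame_and φ φ
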